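/- Let n ≥ 1 and α ∈ (0,1), and let S^1, …, S^{n+1} be i.i.d. real-valued random variables on a common probability space. Then P( S^{n+1} ≤ Quantile_{1−α}( (Σ_{i=1}^n δ_{S^i} + δ_{+∞})/(n+1) ) ) ≥ 1 − α. -/

import Mathlib

open MeasureTheory ProbabilityTheory
open scoped ENNReal

universe u

/-- Measurable space structure on `Option α`, via the identification with `α ⊕ PUnit`. -/
instance optionMeasurableSpace {α : Type u} [MeasurableSpace α] : MeasurableSpace (Option α) :=
  MeasurableSpace.comap (Equiv.optionEquivSumPUnit.{0, u} α) inferInstance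

/-- The `β`-quantile of the discrete distribution `∑ i, w i · δ_{v i}` on `ℝ ∪ {+∞}`:
`inf { z ∈ ℝ : ∑_{i : v i ≤ z} w i ≥ β }`, with `inf ∅ = +∞`. -/
noncomputable def wQuantile {ι : Type*} [Fintype ι] (β : ℝ) (w : ι → ℝ) (v : ι → EReal) : EReal :=
  sInf {z : EReal | ∃ r : ℝ, z = (r : EReal) ∧
    β ≤ ∑ i ∈ Finset.univ.filter (fun i => v i ≤ (r : EReal)), w i}

/-- Total variation distance between two measures. -/
noncomputable def tvDist {Z : Type*} [MeasurableSpace Z] (P Q : Measure Z) : ℝ :=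
  ⨆ A : {A : Set Z // MeasurableSet A}, |(P A.1).toReal - (Q A.1).toReal|

/-- The mask operator: coordinate `j` is `NA` (i.e. `none`) if `m j = true`, else `x j`. -/
def maskOp {d : ℕ} (x : Fin d → ℝ) (m : Fin d → Bool) : Fin d → Option ℝ :=
  fun j => if m j then none else some (x j)

/-- The `β`-quantile of `(∑_{i=1}^n δ_{sc i} + δ_{+∞})/(n+1)`. -/
noncomputable def splitQuantile {n : ℕ} (β : ℝ) (sc : Fin n → ℝ) : EReal :=
  wQuantile β (fun _ : Option (Fin n) => 1 / (n + 1 : ℝ))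
    (fun i => i.elim (⊤ : EReal) (fun j => ((sc j : ℝ) : EReal)))

/-!
Let `k = ⌈(1 - α)(n + 1)⌉`. At every outcome at least `k` of the `n + 1` scores have fewer than
`k` scores strictly below them. I.i.d. scores are exchangeable, so each score has the same
probability of this, which is therefore at least `k / (n + 1) ≥ 1 - α`. A test score with fewer
than `k` scores strictly below it has fewer than `k` calibration scores strictly below it, and
so lies at or below the `(1 - α)`-quantile of the augmented empirical distribution.
-/

open Finset

section StrictRank

variable {ι β : Type*} [Fintype ι] [LinearOrder β]

def strictRank (y : ι → β) (j : ι) : ℕ := #{i | y i < y j}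

lemma strictRank_comp_perm (y : ι → β) (σ : Equiv.Perm ι) (j : ι) :
    strictRank (y ∘ σ) j = strictRank y (σ j) :=
  card_equiv σ fun i => by simp

-- A minimiser of `y` among the indices of rank `≥ k` has all smaller entries of rank `< k`.
lemma le_card_filter_strictRank_lt {k : ℕ} (hk : k ≤ Fintype.card ι) (y : ι → β) :
    k ≤ #{j | strictRank y j < k} := by
  by_cases hall : ∀ j, strictRank y j < k
  · simpa [hall] using hk
  obtain ⟨j, hj, hmin⟩ := exists_min_image ({j | k ≤ strictRank y j} : Finset ι) y
    (by simpa [Finset.Nonempty] using hall)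
  simp only [mem_filter, mem_univ, true_and] at hj hmin
  refine hj.trans (card_le_card fun i hi => ?_)
  simp only [mem_filter, mem_univ, true_and] at hi ⊢
  by_contra! hik
  exact (hmin i hik).not_gt hi

lemma measurable_strictRank [MeasurableSpace β] [TopologicalSpace β] [OrderClosedTopology β]
    [OpensMeasurableSpace β] [SecondCountableTopology β] (j : ι) :
    Measurable fun y : ι → β => strictRank y j := by
  simp only [strictRank, card_filter]
  exact Finset.measurable_sum _ fun i _ =>
    Measurable.ite (measurableSet_lt (measurable_pi_apply i) (measurable_pi_apply j))
      measurable_const measurable_const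

end StrictRank

open Classical in
lemma MeasureTheory.natCast_le_sum_measure_of_le_card_filter_mem {Ω ι : Type*}
    [MeasurableSpace Ω] {μ : Measure Ω} [IsProbabilityMeasure μ] [Fintype ι] {A : ι → Set Ω}
    (hA : ∀ j, MeasurableSet (A j)) {k : ℕ} (hk : ∀ ω, k ≤ #{j | ω ∈ A j}) :
    (k : ℝ≥0∞) ≤ ∑ j, μ (A j) := by
  calc (k : ℝ≥0∞) = ∫⁻ _, (k : ℝ≥0∞) ∂μ := by simp
    _ ≤ ∫⁻ ω, ∑ j, (A j).indicator 1 ω ∂μ := lintegral_mono fun ω => by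
        simpa [Set.indicator_apply] using hk ω
    _ = ∑ j, μ (A j) := by
        rw [lintegral_finsetSum _ fun j _ => measurable_one.indicator (hA j)]
        simp_rw [lintegral_indicator_one (hA _)]

namespace ProbabilityTheory

variable {Ω ι β : Type*} [MeasurableSpace Ω] [MeasurableSpace β] {μ : Measure Ω} [Fintype ι]
  {S : ι → Ω → β}

lemma iIndepFun.map_fun_comp_perm (hS : ∀ i, AEMeasurable (S i) μ) (hindep : iIndepFun S μ)
    (hident : ∀ i j, μ.map (S i) = μ.map (S j)) (σ : Equiv.Perm ι) :
    μ.map (fun ω i => S (σ i) ω) = μ.map (fun ω i => S i ω) := by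
  rw [(hindep.precomp σ.injective).map_fun_eq_pi_map fun i => hS (σ i),
    hindep.map_fun_eq_pi_map hS]
  exact congrArg Measure.pi (funext fun i => hident (σ i) i)

lemma iIndepFun.natCast_le_card_mul_measure_strictRank_lt [IsProbabilityMeasure μ]
    [LinearOrder β] [TopologicalSpace β] [OrderClosedTopology β] [OpensMeasurableSpace β]
    [SecondCountableTopology β] (hS : ∀ i, Measurable (S i)) (hindep : iIndepFun S μ)
    (hident : ∀ i j, μ.map (S i) = μ.map (S j)) {k : ℕ} (hk : k ≤ Fintype.card ι) (j₀ : ι) :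
    (k : ℝ≥0∞) ≤ Fintype.card ι * μ {ω | strictRank (fun i => S i ω) j₀ < k} := by
  classical
  set A : ι → Set Ω := fun j => {ω | strictRank (fun i => S i ω) j < k}
  have hS' : Measurable fun ω i => S i ω := measurable_pi_lambda _ hS
  have hB : ∀ j, MeasurableSet {y : ι → β | strictRank y j < k} := fun j =>
    measurable_strictRank j (MeasurableSet.of_discrete (s := Set.Iio k))
  have hA : ∀ j, MeasurableSet (A j) := fun j => hS' (hB j)
  have hA_eq : ∀ j, μ (A j) = μ (A j₀) := fun j => by
    set σ := Equiv.swap j j₀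
    have hAσ : A j = (fun ω i => S (σ i) ω) ⁻¹' {y | strictRank y j₀ < k} := by
      ext ω
      change _ < k ↔ strictRank ((fun i => S i ω) ∘ σ) j₀ < k
      rw [strictRank_comp_perm, Equiv.swap_apply_right]
    have hσ : Measurable fun ω i => S (σ i) ω := measurable_pi_lambda _ fun i => hS (σ i)
    rw [hAσ, ← Measure.map_apply hσ (hB j₀),
      hindep.map_fun_comp_perm (fun i => (hS i).aemeasurable) hident, Measure.map_apply hS' (hB j₀)]
    rfl
  calc (k : ℝ≥0∞) ≤ ∑ j, μ (A j) :=
        natCast_le_sum_measure_of_le_card_filter_mem hA fun ω => by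
          convert le_card_filter_strictRank_lt hk fun i => S i ω using 3
          exact Iff.rfl
    _ = Fintype.card ι * μ (A j₀) := by
        rw [Fintype.sum_congr _ _ hA_eq, sum_const, card_univ, nsmul_eq_mul]

end ProbabilityTheory

lemma le_wQuantile {ι : Type*} [Fintype ι] {β : ℝ} {w : ι → ℝ} {v : ι → EReal} {t : ℝ}
    (h : ∀ r : ℝ, r < t → ∑ i with v i ≤ r, w i < β) :
    (t : EReal) ≤ wQuantile β w v :=
  le_sInf fun _ ⟨r, hz, hr⟩ =>
    hz ▸ EReal.coe_le_coe_iff.2 (not_lt.1 fun hrt => (h r hrt).not_ge hr)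

lemma coe_le_splitQuantile {n : ℕ} {β : ℝ} {sc : Fin n → ℝ} {t : ℝ}
    (h : #{i | sc i < t} < ⌈β * (n + 1)⌉₊) : (t : EReal) ≤ splitQuantile β sc := by
  refine le_wQuantile fun r hrt => ?_
  have hmass : ∑ i : Option (Fin n) with i.elim ⊤ (fun j => ((sc j : ℝ) : EReal)) ≤ (r : EReal),
      1 / (n + 1 : ℝ) = #{j | sc j ≤ r} / (n + 1) := by
    rw [sum_const, nsmul_eq_mul, mul_one_div, card_filter, card_filter, Fintype.sum_option]
    simp
  have hcard : #{j | sc j ≤ r} ≤ #{i | sc i < t} :=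
    card_le_card fun i => by simpa using fun hi : sc i ≤ r => hi.trans_lt hrt
  rw [hmass, div_lt_iff₀ (by positivity)]
  exact Nat.lt_ceil.1 (hcard.trans_lt h)

theorem split_conformal_iid_scores_general
    {Ω : Type*} [MeasurableSpace Ω] (μ : Measure Ω) [IsProbabilityMeasure μ]
    (n : ℕ) (α : ℝ) (hα : α ∈ Set.Ioo (0 : ℝ) 1)
    (S : Fin (n + 1) → Ω → ℝ) (hSmeas : ∀ i, Measurable (S i))
    (hindep : iIndepFun S μ)
    (hident : ∀ i, Measure.map (S i) μ = Measure.map (S 0) μ) :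
    1 - α ≤
      (μ {x | ((S (Fin.last n) x : ℝ) : EReal) ≤
        splitQuantile (1 - α) (fun i : Fin n => S i.castSucc x)}).toReal := by
  set k := ⌈(1 - α) * (n + 1)⌉₊
  have hk : k ≤ Fintype.card (Fin (n + 1)) := by
    rw [Fintype.card_fin, Nat.ceil_le]
    push_cast
    nlinarith [hα.1]
  have hrank := hindep.natCast_le_card_mul_measure_strictRank_lt hSmeas
    (fun i j => (hident i).trans (hident j).symm) hk (Fin.last n)
  have hcover : {ω | strictRank (fun i => S i ω) (Fin.last n) < k} ⊆
      {x | ((S (Fin.last n) x : ℝ) : EReal) ≤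
        splitQuantile (1 - α) (fun i : Fin n => S i.castSucc x)} := fun ω hω =>
    coe_le_splitQuantile <| (card_le_card_of_injOn Fin.castSucc (fun i hi => by simpa using hi)
      (Fin.castSucc_injective n).injOn).trans_lt hω
  have hmeas := ENNReal.toReal_mono (by finiteness)
    (hrank.trans (mul_le_mul_right (measure_mono hcover) _))
  simp only [ENNReal.toReal_mul, ENNReal.toReal_natCast, Fintype.card_fin] at hmeas
  push_cast at hmeas
  have hceil := Nat.le_ceil ((1 - α) * (n + 1))
  nlinarith

/-- Split conformal prediction with i.i.d. scores is valid:
if `S^1, …, S^{n+1}` are i.i.d. real random variables, then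
`P(S^{n+1} ≤ Quantile_{1-α}((∑_{i=1}^n δ_{S^i} + δ_{+∞})/(n+1))) ≥ 1 - α`. -/
theorem split_conformal_iid_scores
    {Ω : Type*} [MeasurableSpace Ω] (μ : Measure Ω) [IsProbabilityMeasure μ]
    (n : ℕ) (hn : 1 ≤ n) (α : ℝ) (hα : α ∈ Set.Ioo (0 : ℝ) 1)
    (S : Fin (n + 1) → Ω → ℝ) (hSmeas : ∀ i, Measurable (S i))
    (hindep : iIndepFun S μ)
    (hident : ∀ i, Measure.map (S i) μ = Measure.map (S 0) μ) :
    1 - α ≤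
      (μ {x | ((S (Fin.last n) x : ℝ) : EReal) ≤
        splitQuantile (1 - α) (fun i : Fin n => S i.castSucc x)}).toReal :=
  split_conformal_iid_scores_general μ n α hα S hSmeas hindep hident
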